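/- arXiv:1604.06126 — 2 statements merged into one kernel-verified Lean document; each statement's English description precedes it below -/
import Mathlib

section
/- Let n ≥ 3 be an integer and a > 0, and let ψ ∈ 𝒜 satisfy ψ(r) ∼ a r as r → +∞. Then ∫₁^∞ ψ(t)^{−(n−1)} dt < ∞, and the weight ρ(s) := ψ(r(s))^{2(n−1)}/s^{2(n−1)}, where r = r(s) inverts the change of variables 1/((n−2)s^{n−2}) = ∫_r^∞ ψ(t)^{−(n−1)} dt, satisfies lim_{s→+∞} ρ(s) = a^{−2(n−1)/(n−2)}. -/
/-- The class `𝒜` of model functions: `ψ ∈ C^∞((0,∞)) ∩ C¹([0,∞))` with `ψ(0) = 0`,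
`ψ'(0) = 1` (one-sided derivative) and `ψ > 0` on `(0,∞)`. -/
def classA (ψ : ℝ → ℝ) : Prop :=
  ContDiffOn ℝ (⊤ : ℕ∞) ψ (Set.Ioi 0) ∧ ContDiffOn ℝ 1 ψ (Set.Ici 0) ∧
  ψ 0 = 0 ∧ derivWithin ψ (Set.Ici 0) 0 = 1 ∧ ∀ r > (0 : ℝ), 0 < ψ r

/-- The change of variables `s = s(r)` determined by
`1/((n-2) s^{n-2}) = ∫_r^∞ ψ(t)^{-(n-1)} dt`. -/
noncomputable def Svar (n : ℕ) (ψ : ℝ → ℝ) (r : ℝ) : ℝ :=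
  (((n : ℝ) - 2) * ∫ t in Set.Ioi r, 1 / ψ t ^ (n - 1)) ^ (-(1 / ((n : ℝ) - 2)))

open Set Filter MeasureTheory Real intervalIntegral Topology

namespace Stmt13

variable {n : ℕ} {a : ℝ} {ψ : ℝ → ℝ}

lemma psi_pos (hψA : classA ψ) : ∀ r > (0:ℝ), 0 < ψ r := hψA.2.2.2.2

lemma f_contOn (hψA : classA ψ) :
    ContinuousOn (fun t => 1 / ψ t ^ (n - 1)) (Ioi (0:ℝ)) := by
  apply ContinuousOn.div continuousOn_const ((hψA.1.continuousOn).pow _)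
  intro x hx
  exact pow_ne_zero _ (psi_pos hψA x hx).ne'

lemma psi_bounds (ha : 0 < a)
    (hψ : Tendsto (fun r => ψ r / (a * r)) atTop (𝓝 1)) {ε : ℝ} (hε : 0 < ε) (hε1 : ε < 1) :
    ∀ᶠ t in atTop, 0 < t ∧ (1 - ε) * a * t ≤ ψ t ∧ ψ t ≤ (1 + ε) * a * t := by
  have h1 : ∀ᶠ t in atTop, ψ t / (a * t) ∈ Icc (1 - ε) (1 + ε) :=
    hψ (Icc_mem_nhds (by linarith) (by linarith))
  filter_upwards [h1, eventually_gt_atTop 0] with t ht ht0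
  have hat : 0 < a * t := mul_pos ha ht0
  refine ⟨ht0, ?_, ?_⟩
  · have := (le_div_iff₀ hat).1 ht.1
    linarith [this, mul_assoc (1 - ε) a t]
  · have := (div_le_iff₀ hat).1 ht.2
    linarith [this, mul_assoc (1 + ε) a t]


lemma cast_sub_one (hn : 3 ≤ n) : ((n - 1 : ℕ) : ℝ) = (n : ℝ) - 1 := by
  have h1 : 1 ≤ n := by omega
  push_cast [Nat.cast_sub h1]
  ring

lemma f_integrableOn (hn : 3 ≤ n) (ha : 0 < a) (hψA : classA ψ)
    (hψ : Tendsto (fun r => ψ r / (a * r)) atTop (𝓝 1)) {r : ℝ} (hr : 0 < r) :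
    IntegrableOn (fun t => 1 / ψ t ^ (n - 1)) (Ioi r) := by
  have hnR : (3:ℝ) ≤ (n:ℝ) := by exact_mod_cast hn
  obtain ⟨M0, hM0⟩ := (psi_bounds ha hψ (by norm_num : (0:ℝ) < 1/2) (by norm_num)).exists_forall_of_atTop
  set M := max r M0 with hMdef
  have hrM : r ≤ M := le_max_left _ _
  have hM : 0 < M := lt_of_lt_of_le hr hrM
  rw [← Ioc_union_Ioi_eq_Ioi hrM, integrableOn_union]
  constructor
  · have hs : Icc r M ⊆ Ioi (0:ℝ) := fun x hx => lt_of_lt_of_le hr hx.1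
    exact (((f_contOn hψA).mono hs).integrableOn_Icc).mono_set Ioc_subset_Icc_self
  · have hexp : -((n:ℝ) - 1) < -1 := by linarith
    have hg : IntegrableOn (fun t => ((a/2) ^ (n-1))⁻¹ * t ^ (-((n:ℝ)-1))) (Ioi M) :=
      (integrableOn_Ioi_rpow_of_lt hexp hM).const_mul _
    apply Integrable.mono' hg
    · have hs : Ioi M ⊆ Ioi (0:ℝ) := fun x hx => lt_trans hM hx
      exact ((f_contOn hψA).mono hs).aestronglyMeasurable measurableSet_Ioi
    · rw [ae_restrict_iff' measurableSet_Ioi]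
      refine ae_of_all _ fun t ht => ?_
      obtain ⟨ht0, hlow, _⟩ := hM0 t (le_of_lt (lt_of_le_of_lt (le_max_right r M0) ht))
      have hc : a/2 * t ≤ ψ t := by
        have h2 : (1 - 1/2) * a * t = a/2 * t := by ring
        linarith [h2 ▸ hlow]
      have hψt : 0 < ψ t := psi_pos hψA t ht0
      have hct : 0 < a/2 * t := by positivity
      have hpow : (a/2 * t) ^ (n-1) ≤ ψ t ^ (n-1) := pow_le_pow_left₀ hct.le hc _
      have hrpow : t ^ (-((n:ℝ)-1)) = (t ^ (n-1 : ℕ))⁻¹ := by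
        rw [← cast_sub_one hn, Real.rpow_neg ht0.le, Real.rpow_natCast]
      have hnorm : ‖1 / ψ t ^ (n-1)‖ = 1 / ψ t ^ (n-1) :=
        Real.norm_of_nonneg (by positivity)
      rw [hnorm, hrpow, ← mul_inv, ← mul_pow]
      rw [one_div]
      exact inv_anti₀ (by positivity) hpow

lemma F_split (hn : 3 ≤ n) (ha : 0 < a) (hψA : classA ψ)
    (hψ : Tendsto (fun r => ψ r / (a * r)) atTop (𝓝 1)) {r₁ r₂ : ℝ} (h1 : 0 < r₁) (h12 : r₁ ≤ r₂) :
    ∫ t in Ioi r₁, 1 / ψ t ^ (n - 1) =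
      (∫ t in Ioc r₁ r₂, 1 / ψ t ^ (n - 1)) + ∫ t in Ioi r₂, 1 / ψ t ^ (n - 1) := by
  rw [← setIntegral_union (Ioc_disjoint_Ioi le_rfl) measurableSet_Ioi
      ((f_integrableOn hn ha hψA hψ h1).mono_set Ioc_subset_Ioi_self)
      (f_integrableOn hn ha hψA hψ (lt_of_lt_of_le h1 h12)),
    Ioc_union_Ioi_eq_Ioi h12]

lemma F_nonneg (hψA : classA ψ) {r : ℝ} (hr : 0 < r) :
    0 ≤ ∫ t in Ioi r, 1 / ψ t ^ (n - 1) := by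
  refine setIntegral_nonneg measurableSet_Ioi fun t ht => ?_
  have := psi_pos hψA t (lt_trans hr ht)
  positivity

lemma Ioc_int_pos (hn : 3 ≤ n) (ha : 0 < a) (hψA : classA ψ)
    (hψ : Tendsto (fun r => ψ r / (a * r)) atTop (𝓝 1)) {r₁ r₂ : ℝ} (h1 : 0 < r₁) (h12 : r₁ < r₂) :
    0 < ∫ t in Ioc r₁ r₂, 1 / ψ t ^ (n - 1) := by
  rw [← intervalIntegral.integral_of_le h12.le]
  apply intervalIntegral_pos_of_pos_on
  · apply ContinuousOn.intervalIntegrable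
    apply (f_contOn hψA).mono
    rw [uIcc_of_le h12.le]
    exact fun x hx => lt_of_lt_of_le h1 hx.1
  · intro x hx
    have := psi_pos hψA x (lt_trans h1 hx.1)
    positivity
  · exact h12

lemma F_pos (hn : 3 ≤ n) (ha : 0 < a) (hψA : classA ψ)
    (hψ : Tendsto (fun r => ψ r / (a * r)) atTop (𝓝 1)) {r : ℝ} (hr : 0 < r) :
    0 < ∫ t in Ioi r, 1 / ψ t ^ (n - 1) := by
  rw [F_split hn ha hψA hψ hr (le_of_lt (lt_add_one r))]
  have h1 := Ioc_int_pos hn ha hψA hψ hr (lt_add_one r)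
  have h2 := F_nonneg (n := n) hψA (lt_trans hr (lt_add_one r))
  linarith

lemma F_strictAnti (hn : 3 ≤ n) (ha : 0 < a) (hψA : classA ψ)
    (hψ : Tendsto (fun r => ψ r / (a * r)) atTop (𝓝 1)) {r₁ r₂ : ℝ} (h1 : 0 < r₁) (h12 : r₁ < r₂) :
    (∫ t in Ioi r₂, 1 / ψ t ^ (n - 1)) < ∫ t in Ioi r₁, 1 / ψ t ^ (n - 1) := by
  rw [F_split hn ha hψA hψ h1 h12.le]
  linarith [Ioc_int_pos hn ha hψA hψ h1 h12]

lemma F_hasDeriv (hn : 3 ≤ n) (ha : 0 < a) (hψA : classA ψ)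
    (hψ : Tendsto (fun r => ψ r / (a * r)) atTop (𝓝 1)) {r : ℝ} (hr : 0 < r) :
    HasDerivAt (fun u => ∫ t in Ioi u, 1 / ψ t ^ (n - 1)) (-(1 / ψ r ^ (n - 1))) r := by
  have hr2 : 0 < r / 2 := by linarith
  have hint : IntervalIntegrable (fun t => 1 / ψ t ^ (n - 1)) volume (r/2) r := by
    apply ContinuousOn.intervalIntegrable
    apply (f_contOn hψA).mono
    rw [uIcc_of_le (by linarith)]
    exact fun x hx => lt_of_lt_of_le hr2 hx.1
  have hmeas := ContinuousOn.stronglyMeasurableAtFilter (μ := volume) isOpen_Ioi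
    (f_contOn hψA (n := n)) r hr
  have hcont : ContinuousAt (fun t => 1 / ψ t ^ (n - 1)) r :=
    (f_contOn hψA).continuousAt (isOpen_Ioi.mem_nhds hr)
  have hd : HasDerivAt (fun u => (∫ t in Ioi (r/2), 1 / ψ t ^ (n - 1)) - ∫ t in (r/2)..u, 1 / ψ t ^ (n - 1))
      (-(1 / ψ r ^ (n - 1))) r :=
    by simpa [Pi.sub_def] using (hasDerivAt_const r _).sub (intervalIntegral.integral_hasDerivAt_right hint hmeas hcont)
  apply hd.congr_of_eventuallyEq
  filter_upwards [isOpen_Ioi.mem_nhds (show r ∈ Ioi (r/2) by simp; linarith)] with u hu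
  have hsplit := F_split hn ha hψA hψ hr2 (le_of_lt hu)
  rw [intervalIntegral.integral_of_le (le_of_lt hu)]
  linarith [hsplit]

lemma F_le (hn : 3 ≤ n) (ha : 0 < a) (hψA : classA ψ)
    (hψ : Tendsto (fun r => ψ r / (a * r)) atTop (𝓝 1)) :
    ∀ᶠ r in atTop, (∫ t in Ioi r, 1 / ψ t ^ (n - 1)) ≤
      ((a/2) ^ (n-1))⁻¹ / ((n:ℝ) - 2) * r ^ (-((n:ℝ) - 2)) := by
  have hnR : (3:ℝ) ≤ (n:ℝ) := by exact_mod_cast hn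
  have hm : (0:ℝ) < (n:ℝ) - 2 := by linarith
  have hexp : -((n:ℝ) - 1) < -1 := by linarith
  obtain ⟨M0, hM0⟩ := (psi_bounds ha hψ (by norm_num : (0:ℝ) < 1/2) (by norm_num)).exists_forall_of_atTop
  filter_upwards [eventually_ge_atTop M0, eventually_gt_atTop 0] with r hrM hr0
  have hmono : (∫ t in Ioi r, 1 / ψ t ^ (n - 1)) ≤
      ∫ t in Ioi r, ((a/2) ^ (n-1))⁻¹ * t ^ (-((n:ℝ) - 1)) := by
    apply setIntegral_mono_on (f_integrableOn hn ha hψA hψ hr0)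
      ((integrableOn_Ioi_rpow_of_lt hexp hr0).const_mul _) measurableSet_Ioi
    intro t ht
    obtain ⟨ht0, hlow, _⟩ := hM0 t (le_of_lt (lt_of_le_of_lt hrM ht))
    have hc : a/2 * t ≤ ψ t := by
      have h2 : (1 - 1/2) * a * t = a/2 * t := by ring
      linarith [h2 ▸ hlow]
    have hψt : 0 < ψ t := psi_pos hψA t ht0
    have hct : 0 < a/2 * t := by positivity
    have hpow : (a/2 * t) ^ (n-1) ≤ ψ t ^ (n-1) := pow_le_pow_left₀ hct.le hc _
    have hrpow : t ^ (-((n:ℝ)-1)) = (t ^ (n-1 : ℕ))⁻¹ := by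
      rw [← cast_sub_one hn, Real.rpow_neg ht0.le, Real.rpow_natCast]
    rw [hrpow, ← mul_inv, ← mul_pow, one_div]
    exact inv_anti₀ (by positivity) hpow
  have hval : ∫ t in Ioi r, ((a/2) ^ (n-1))⁻¹ * t ^ (-((n:ℝ) - 1)) =
      ((a/2) ^ (n-1))⁻¹ / ((n:ℝ) - 2) * r ^ (-((n:ℝ) - 2)) := by
    rw [MeasureTheory.integral_const_mul, integral_Ioi_rpow_of_lt hexp hr0]
    have he : -((n:ℝ) - 1) + 1 = -((n:ℝ) - 2) := by ring
    rw [he, neg_div_neg_eq]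
    ring
  linarith [hval ▸ hmono]

lemma F_tendsto_zero (hn : 3 ≤ n) (ha : 0 < a) (hψA : classA ψ)
    (hψ : Tendsto (fun r => ψ r / (a * r)) atTop (𝓝 1)) :
    Tendsto (fun r => ∫ t in Ioi r, 1 / ψ t ^ (n - 1)) atTop (𝓝 0) := by
  have hnR : (3:ℝ) ≤ (n:ℝ) := by exact_mod_cast hn
  have hm : (0:ℝ) < (n:ℝ) - 2 := by linarith
  have hup : Tendsto (fun r : ℝ => ((a/2) ^ (n-1))⁻¹ / ((n:ℝ) - 2) * r ^ (-((n:ℝ) - 2)))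
      atTop (𝓝 0) := by
    have := (tendsto_rpow_neg_atTop hm).const_mul (((a/2) ^ (n-1))⁻¹ / ((n:ℝ) - 2))
    simpa using this
  apply tendsto_of_tendsto_of_tendsto_of_le_of_le' tendsto_const_nhds hup
  · filter_upwards [eventually_gt_atTop 0] with r hr using F_nonneg hψA hr
  · exact F_le hn ha hψA hψ

lemma r_div_psi (ha : 0 < a)
    (hψ : Tendsto (fun r => ψ r / (a * r)) atTop (𝓝 1)) :
    Tendsto (fun r => r / ψ r) atTop (𝓝 a⁻¹) := by
  have h1 : Tendsto (fun r => (ψ r / (a * r))⁻¹) atTop (𝓝 1⁻¹) := hψ.inv₀ one_ne_zero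
  simp only [inv_div, inv_one] at h1
  have h2 := h1.const_mul a⁻¹
  rw [mul_one] at h2
  apply h2.congr
  intro r
  rw [← mul_div_assoc, ← mul_assoc, inv_mul_cancel₀ ha.ne', one_mul]

lemma F_div_tendsto (hn : 3 ≤ n) (ha : 0 < a) (hψA : classA ψ)
    (hψ : Tendsto (fun r => ψ r / (a * r)) atTop (𝓝 1)) :
    Tendsto (fun r => (∫ t in Ioi r, 1 / ψ t ^ (n - 1)) / r ^ (-((n:ℝ) - 2))) atTop
      (𝓝 (a⁻¹ ^ (n - 1) / ((n:ℝ) - 2))) := by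
  have hnR : (3:ℝ) ≤ (n:ℝ) := by exact_mod_cast hn
  have hm : (0:ℝ) < (n:ℝ) - 2 := by linarith
  apply HasDerivAt.lhopital_zero_atTop
    (f' := fun r => -(1 / ψ r ^ (n - 1)))
    (g' := fun r => -((n:ℝ) - 2) * r ^ (-((n:ℝ) - 2) - 1))
  · filter_upwards [eventually_gt_atTop 0] with r hr
    exact F_hasDeriv hn ha hψA hψ hr
  · filter_upwards [eventually_gt_atTop 0] with r hr
    have := Real.hasDerivAt_rpow_const (x := r) (p := -((n:ℝ) - 2)) (Or.inl hr.ne')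
    simpa using this
  · filter_upwards [eventually_gt_atTop 0] with r hr
    exact mul_ne_zero (by linarith) (Real.rpow_pos_of_pos hr _).ne'
  · exact F_tendsto_zero hn ha hψA hψ
  · exact tendsto_rpow_neg_atTop hm
  · have hbase := r_div_psi ha hψ
    have hpow := (hbase.pow (n - 1)).div_const ((n:ℝ) - 2)
    apply hpow.congr'
    filter_upwards [psi_bounds ha hψ (by norm_num : (0:ℝ) < 1/2) (by norm_num)] with r hr
    obtain ⟨hr0, _, _⟩ := hr
    have hψr : 0 < ψ r := psi_pos hψA r hr0
    have hrpow : r ^ (-((n:ℝ) - 2) - 1) = (r ^ (n - 1 : ℕ))⁻¹ := by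
      have he : -((n:ℝ) - 2) - 1 = -((n:ℝ) - 1) := by ring
      rw [he, ← cast_sub_one hn, Real.rpow_neg hr0.le, Real.rpow_natCast]
    rw [hrpow, div_pow]
    have h1 : (ψ r ^ (n-1)) ≠ 0 := (pow_pos hψr _).ne'
    have h2 : ((r:ℝ) ^ (n-1)) ≠ 0 := (pow_pos hr0 _).ne'
    have hm' : ((n:ℝ) - 2) ≠ 0 := hm.ne'
    set m := (n:ℝ) - 2 with hmdef
    field_simp

lemma Svar_div_tendsto (hn : 3 ≤ n) (ha : 0 < a) (hψA : classA ψ)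
    (hψ : Tendsto (fun r => ψ r / (a * r)) atTop (𝓝 1)) :
    Tendsto (fun r => Svar n ψ r / r) atTop
      (𝓝 ((a⁻¹ ^ (n - 1)) ^ (-(1 / ((n:ℝ) - 2))))) := by
  have hnR : (3:ℝ) ≤ (n:ℝ) := by exact_mod_cast hn
  have hm : (0:ℝ) < (n:ℝ) - 2 := by linarith
  have hG := F_div_tendsto hn ha hψA hψ
  have hmul : Tendsto (fun r => ((n:ℝ) - 2) *
      ((∫ t in Ioi r, 1 / ψ t ^ (n - 1)) / r ^ (-((n:ℝ) - 2)))) atTop (𝓝 (a⁻¹ ^ (n - 1))) := by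
    have := hG.const_mul ((n:ℝ) - 2)
    rwa [mul_div_cancel₀ _ hm.ne'] at this
  have hlimpos : (0:ℝ) < a⁻¹ ^ (n - 1) := by positivity
  have hcont : ContinuousAt (fun x : ℝ => x ^ (-(1 / ((n:ℝ) - 2)))) (a⁻¹ ^ (n - 1)) :=
    Real.continuousAt_rpow_const _ _ (Or.inl hlimpos.ne')
  have hcomp := (hcont.tendsto).comp hmul
  apply hcomp.congr'
  filter_upwards [eventually_gt_atTop 0, (tendsto_order.1 hmul).1 0 hlimpos] with r hr hGr
  simp only [Function.comp_apply]
  set F := ∫ t in Ioi r, 1 / ψ t ^ (n - 1) with hF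
  have hrp : (0:ℝ) < r ^ (-((n:ℝ) - 2)) := Real.rpow_pos_of_pos hr _
  have hFeq : F = F / r ^ (-((n:ℝ) - 2)) * r ^ (-((n:ℝ) - 2)) := by
    rw [div_mul_cancel₀ _ hrp.ne']
  have key : Svar n ψ r = (((n:ℝ) - 2) * (F / r ^ (-((n:ℝ) - 2)))) ^ (-(1 / ((n:ℝ) - 2))) * r := by
    rw [Svar, ← hF]
    nth_rewrite 1 [hFeq]
    rw [show ((n:ℝ) - 2) * (F / r ^ (-((n:ℝ) - 2)) * r ^ (-((n:ℝ) - 2))) =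
      (((n:ℝ) - 2) * (F / r ^ (-((n:ℝ) - 2)))) * r ^ (-((n:ℝ) - 2)) from by ring]
    rw [Real.mul_rpow hGr.le hrp.le, ← Real.rpow_mul hr.le]
    rw [show -((n:ℝ) - 2) * -(1 / ((n:ℝ) - 2)) = 1 from by field_simp, Real.rpow_one]
  rw [key, mul_div_cancel_right₀ _ hr.ne']

lemma Svar_pos (hn : 3 ≤ n) (ha : 0 < a) (hψA : classA ψ)
    (hψ : Tendsto (fun r => ψ r / (a * r)) atTop (𝓝 1)) {r : ℝ} (hr : 0 < r) :
    0 < Svar n ψ r := by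
  have hnR : (3:ℝ) ≤ (n:ℝ) := by exact_mod_cast hn
  have hm : (0:ℝ) < (n:ℝ) - 2 := by linarith
  exact Real.rpow_pos_of_pos (mul_pos hm (F_pos hn ha hψA hψ hr)) _

lemma Svar_strictMonoOn (hn : 3 ≤ n) (ha : 0 < a) (hψA : classA ψ)
    (hψ : Tendsto (fun r => ψ r / (a * r)) atTop (𝓝 1)) :
    StrictMonoOn (Svar n ψ) (Ioi 0) := by
  have hnR : (3:ℝ) ≤ (n:ℝ) := by exact_mod_cast hn
  have hm : (0:ℝ) < (n:ℝ) - 2 := by linarith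
  intro r₁ h1 r₂ h2 h12
  rw [mem_Ioi] at h1 h2
  have hF := F_strictAnti hn ha hψA hψ h1 h12
  exact Real.rpow_lt_rpow_of_neg (mul_pos hm (F_pos hn ha hψA hψ h2))
    (by nlinarith) (by rw [neg_lt, neg_zero]; positivity)

lemma Svar_continuousAt (hn : 3 ≤ n) (ha : 0 < a) (hψA : classA ψ)
    (hψ : Tendsto (fun r => ψ r / (a * r)) atTop (𝓝 1)) {r : ℝ} (hr : 0 < r) :
    ContinuousAt (Svar n ψ) r := by
  have hnR : (3:ℝ) ≤ (n:ℝ) := by exact_mod_cast hn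
  have hm : (0:ℝ) < (n:ℝ) - 2 := by linarith
  have hF : ContinuousAt (fun u => ∫ t in Ioi u, 1 / ψ t ^ (n - 1)) r :=
    (F_hasDeriv hn ha hψA hψ hr).continuousAt
  have h1 : ContinuousAt (fun u => ((n:ℝ) - 2) * ∫ t in Ioi u, 1 / ψ t ^ (n - 1)) r :=
    continuousAt_const.mul hF
  have h2 := Real.continuousAt_rpow_const (((n:ℝ) - 2) * ∫ t in Ioi r, 1 / ψ t ^ (n - 1))
    (-(1 / ((n:ℝ) - 2))) (Or.inl (mul_pos hm (F_pos hn ha hψA hψ hr)).ne')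
  show ContinuousAt (fun u => ((((n:ℝ) - 2) * ∫ t in Ioi u, 1 / ψ t ^ (n - 1)) ^ (-(1 / ((n:ℝ) - 2))))) r
  exact ContinuousAt.comp (g := fun x : ℝ => x ^ (-(1 / ((n:ℝ) - 2))))
    (f := fun u => ((n:ℝ) - 2) * ∫ t in Ioi u, 1 / ψ t ^ (n - 1)) h2 h1

lemma Svar_tendsto_atTop (hn : 3 ≤ n) (ha : 0 < a) (hψA : classA ψ)
    (hψ : Tendsto (fun r => ψ r / (a * r)) atTop (𝓝 1)) :
    Tendsto (Svar n ψ) atTop atTop := by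
  have hlimpos : (0:ℝ) < (a⁻¹ ^ (n - 1)) ^ (-(1 / ((n:ℝ) - 2))) :=
    Real.rpow_pos_of_pos (by positivity) _
  have := (Svar_div_tendsto hn ha hψA hψ).pos_mul_atTop hlimpos tendsto_id
  apply this.congr'
  filter_upwards [eventually_gt_atTop 0] with r hr
  simp only [id_eq]
  rw [div_mul_cancel₀ _ hr.ne']

lemma psi_small (hψA : classA ψ) :
    ∃ δ > (0:ℝ), ∀ t ∈ Ioc (0:ℝ) δ, ψ t ≤ 2 * t := by
  have hdiff : DifferentiableWithinAt ℝ ψ (Ici 0) 0 :=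
    (hψA.2.1.differentiableOn one_ne_zero) 0 self_mem_Ici
  have hder : HasDerivWithinAt ψ 1 (Ici 0) 0 := by
    have := hdiff.hasDerivWithinAt
    rwa [hψA.2.2.2.1] at this
  rw [hasDerivWithinAt_iff_tendsto_slope] at hder
  rw [show (Ici (0:ℝ) \ {0}) = Ioi 0 from Ici_sdiff_left] at hder
  have h2 : ∀ᶠ t in 𝓝[>] (0:ℝ), slope ψ 0 t < 2 := by
    have := hder (Iio_mem_nhds (by norm_num : (1:ℝ) < 2))
    exact this
  rw [eventually_iff] at h2
  obtain ⟨δ, hδ, hsub⟩ := mem_nhdsGT_iff_exists_Ioc_subset.1 h2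
  rw [mem_Ioi] at hδ
  refine ⟨δ, hδ, fun t ht => ?_⟩
  have := hsub ht
  rw [mem_setOf_eq, slope_def_field, hψA.2.2.1, sub_zero, sub_zero] at this
  have ht0 : 0 < t := ht.1
  calc ψ t = ψ t / t * t := by rw [div_mul_cancel₀ _ ht0.ne']
  _ ≤ 2 * t := by apply mul_le_mul_of_nonneg_right this.le ht0.le

lemma F_large (hn : 3 ≤ n) (ha : 0 < a) (hψA : classA ψ)
    (hψ : Tendsto (fun r => ψ r / (a * r)) atTop (𝓝 1)) (M R : ℝ) (hR : 0 < R) :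
    ∃ r, 0 < r ∧ r ≤ R ∧ M ≤ ∫ t in Ioi r, 1 / ψ t ^ (n - 1) := by
  obtain ⟨δ, hδ0, hδ⟩ := psi_small hψA
  set δ' := min δ (min R 1) with hδ'def
  have hδ'0 : 0 < δ' := lt_min hδ0 (lt_min hR one_pos)
  have hδ'R : δ' ≤ R := le_trans (min_le_right _ _) (min_le_left _ _)
  have hδ'1 : δ' ≤ 1 := le_trans (min_le_right _ _) (min_le_right _ _)
  have hδ'δ : δ' ≤ δ := min_le_left _ _
  set c := (2:ℝ) ^ (n - 1) * (|M| + 1) with hcdef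
  have hc0 : 0 < c := by positivity
  set r := δ' * Real.exp (-c) with hrdef
  have hr0 : 0 < r := by positivity
  have hrδ' : r < δ' := by
    have : Real.exp (-c) < 1 := Real.exp_lt_one_iff.2 (by linarith)
    nlinarith
  refine ⟨r, hr0, le_trans hrδ'.le hδ'R, ?_⟩
  have hlow : ∀ t ∈ Ioc r δ', ((2:ℝ) ^ (n - 1))⁻¹ * t⁻¹ ≤ 1 / ψ t ^ (n - 1) := by
    intro t ht
    have ht0 : 0 < t := lt_trans hr0 ht.1
    have hψt : 0 < ψ t := psi_pos hψA t ht0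
    have hψle : ψ t ≤ 2 * t := hδ t ⟨ht0, le_trans ht.2 hδ'δ⟩
    have h1 : ψ t ^ (n - 1) ≤ (2 * t) ^ (n - 1) := pow_le_pow_left₀ hψt.le hψle _
    have h2 : t ^ (n - 1) ≤ t := by
      have := pow_le_pow_of_le_one ht0.le (le_trans ht.2 hδ'1) (show 1 ≤ n - 1 by omega)
      simpa using this
    have h3 : ψ t ^ (n - 1) ≤ 2 ^ (n - 1) * t := by
      rw [mul_pow] at h1
      nlinarith [pow_pos ht0 (n-1), pow_pos (show (0:ℝ) < 2 by norm_num) (n-1)]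
    rw [one_div, ← mul_inv]
    exact inv_anti₀ (pow_pos hψt _) h3
  have hint1 : IntegrableOn (fun t => ((2:ℝ) ^ (n - 1))⁻¹ * t⁻¹) (Ioc r δ') := by
    have hcont : ContinuousOn (fun t : ℝ => ((2:ℝ) ^ (n - 1))⁻¹ * t⁻¹) (Icc r δ') := by
      apply ContinuousOn.mul continuousOn_const
      apply ContinuousOn.inv₀ continuousOn_id
      intro x hx
      exact (lt_of_lt_of_le hr0 hx.1).ne'
    exact hcont.integrableOn_Icc.mono_set Ioc_subset_Icc_self
  have hint2 : IntegrableOn (fun t => 1 / ψ t ^ (n - 1)) (Ioc r δ') :=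
    (f_integrableOn hn ha hψA hψ hr0).mono_set Ioc_subset_Ioi_self
  have hmono := setIntegral_mono_on hint1 hint2 measurableSet_Ioc hlow
  have hval : ∫ t in Ioc r δ', ((2:ℝ) ^ (n - 1))⁻¹ * t⁻¹ = ((2:ℝ) ^ (n - 1))⁻¹ * c := by
    rw [← intervalIntegral.integral_of_le hrδ'.le, intervalIntegral.integral_const_mul,
      integral_inv_of_pos hr0 hδ'0]
    congr 1
    rw [hrdef, show δ' / (δ' * Real.exp (-c)) = (Real.exp (-c))⁻¹ from by
      rw [div_mul_eq_div_div, div_self hδ'0.ne', one_div], ← Real.exp_neg, neg_neg, Real.log_exp]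
  have hsplit := F_split hn ha hψA hψ hr0 (le_trans hrδ'.le (le_refl δ'))
  have hFnn := F_nonneg (n := n) hψA hδ'0
  have hcc : ((2:ℝ) ^ (n - 1))⁻¹ * c = |M| + 1 := by
    rw [hcdef, ← mul_assoc, inv_mul_cancel₀ (by positivity : ((2:ℝ) ^ (n-1)) ≠ 0), one_mul]
  have : M ≤ ∫ t in Ioc r δ', 1 / ψ t ^ (n - 1) := by
    rw [hval, hcc] at hmono
    have := le_abs_self M
    linarith
  rw [hsplit]
  linarith

lemma Svar_surj (hn : 3 ≤ n) (ha : 0 < a) (hψA : classA ψ)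
    (hψ : Tendsto (fun r => ψ r / (a * r)) atTop (𝓝 1)) {s : ℝ} (hs : 0 < s) :
    ∃ r, 0 < r ∧ Svar n ψ r = s := by
  have hnR : (3:ℝ) ≤ (n:ℝ) := by exact_mod_cast hn
  have hm : (0:ℝ) < (n:ℝ) - 2 := by linarith
  obtain ⟨R, hRs, hR0⟩ :=
    (((Svar_tendsto_atTop hn ha hψA hψ).eventually_ge_atTop s).and (eventually_gt_atTop 0)).exists
  obtain ⟨r₀, hr₀0, hr₀R, hr₀F⟩ := F_large hn ha hψA hψ (s ^ (-((n:ℝ) - 2)) / ((n:ℝ) - 2)) R hR0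
  have hle : Svar n ψ r₀ ≤ s := by
    have h1 : s ^ (-((n:ℝ) - 2)) ≤ ((n:ℝ) - 2) * ∫ t in Ioi r₀, 1 / ψ t ^ (n - 1) := by
      have := mul_le_mul_of_nonneg_left hr₀F hm.le
      rwa [mul_div_cancel₀ _ hm.ne'] at this
    have h2 : (0:ℝ) < s ^ (-((n:ℝ) - 2)) := Real.rpow_pos_of_pos hs _
    have h3 := Real.rpow_le_rpow_of_nonpos h2 h1
      (show -(1 / ((n:ℝ) - 2)) ≤ 0 by rw [neg_nonpos]; positivity)
    have h4 : (s ^ (-((n:ℝ) - 2))) ^ (-(1 / ((n:ℝ) - 2))) = s := by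
      rw [← Real.rpow_mul hs.le, show -((n:ℝ) - 2) * -(1 / ((n:ℝ) - 2)) = 1 from by field_simp,
        Real.rpow_one]
    rw [Svar]
    calc (((n:ℝ) - 2) * ∫ t in Ioi r₀, 1 / ψ t ^ (n - 1)) ^ (-(1 / ((n:ℝ) - 2)))
        ≤ (s ^ (-((n:ℝ) - 2))) ^ (-(1 / ((n:ℝ) - 2))) := h3
      _ = s := h4
  have hcont : ContinuousOn (Svar n ψ) (Icc r₀ R) := fun x hx =>
    (Svar_continuousAt hn ha hψA hψ (lt_of_lt_of_le hr₀0 hx.1)).continuousWithinAt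
  obtain ⟨x, hx, hxs⟩ := intermediate_value_Icc hr₀R hcont ⟨hle, hRs⟩
  exact ⟨x, lt_of_lt_of_le hr₀0 hx.1, hxs⟩

end Stmt13

open Stmt13

/-- quasi-Euclidean models III, Section 7.3 of the paper. Let
`n ≥ 3`, `a > 0` and `ψ ∈ 𝒜` with `ψ(r) ∼ a r` as `r → +∞`. Then the tail integral is
finite and the weight `ρ(s) = ψ(r(s))^{2(n-1)}/s^{2(n-1)}` tends to
`a^{-2(n-1)/(n-2)}` as `s → +∞`. -/
theorem stmt_13
    (n : ℕ) (hn : 3 ≤ n) (a : ℝ) (ha : 0 < a)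
    (ψ : ℝ → ℝ) (hψA : classA ψ)
    (hψasymp : Filter.Tendsto (fun r => ψ r / (a * r)) Filter.atTop (nhds 1)) :
    MeasureTheory.IntegrableOn (fun t => 1 / ψ t ^ (n - 1)) (Set.Ioi 1) ∧
    ∃ rOf : ℝ → ℝ,
      (∀ r > (0 : ℝ), rOf (Svar n ψ r) = r) ∧
      (∀ s > (0 : ℝ), Svar n ψ (rOf s) = s) ∧
      Filter.Tendsto (fun s => ψ (rOf s) ^ (2 * (n - 1)) / s ^ (2 * (n - 1)))
        Filter.atTop (nhds (a ^ (-(2 * ((n : ℝ) - 1) / ((n : ℝ) - 2))))) := by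
  classical
  have hnR : (3:ℝ) ≤ (n:ℝ) := by exact_mod_cast hn
  have hm : (0:ℝ) < (n:ℝ) - 2 := by linarith
  have hm' : ((n:ℝ) - 2) ≠ 0 := hm.ne'
  refine ⟨f_integrableOn hn ha hψA hψasymp one_pos, ?_⟩
  set rOf : ℝ → ℝ := fun s => if h : ∃ r, 0 < r ∧ Svar n ψ r = s then h.choose else 1 with hrOf
  have hspec : ∀ s : ℝ, 0 < s → 0 < rOf s ∧ Svar n ψ (rOf s) = s := by
    intro s hs
    have hex := Svar_surj hn ha hψA hψasymp hs
    simp only [hrOf, dif_pos hex]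
    exact hex.choose_spec
  have hinj := (Svar_strictMonoOn hn ha hψA hψasymp).injOn
  have hleft : ∀ r > (0:ℝ), rOf (Svar n ψ r) = r := by
    intro r hr
    have hs : 0 < Svar n ψ r := Svar_pos hn ha hψA hψasymp hr
    obtain ⟨h1, h2⟩ := hspec _ hs
    exact hinj (mem_Ioi.2 h1) (mem_Ioi.2 hr) h2
  refine ⟨rOf, hleft, fun s hs => (hspec s hs).2, ?_⟩
  have hrOftop : Tendsto rOf atTop atTop := by
    rw [tendsto_atTop]
    intro b
    set b' := max b 1 with hb'
    have hb'0 : (0:ℝ) < b' := lt_of_lt_of_le one_pos (le_max_right _ _)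
    filter_upwards [eventually_ge_atTop (max (Svar n ψ b') 1)] with s hsge
    have hs0 : (0:ℝ) < s := lt_of_lt_of_le one_pos (le_trans (le_max_right _ _) hsge)
    obtain ⟨hr1, hr2⟩ := hspec s hs0
    have hb'le : b' ≤ rOf s := by
      by_contra h
      push_neg at h
      have hlt := Svar_strictMonoOn hn ha hψA hψasymp (mem_Ioi.2 hr1) (mem_Ioi.2 hb'0) h
      rw [hr2] at hlt
      have : Svar n ψ b' ≤ s := le_trans (le_max_left _ _) hsge
      linarith
    exact le_trans (le_max_left b 1) hb'le
  set A1 := (a⁻¹ ^ (n - 1)) ^ (-(1 / ((n:ℝ) - 2))) with hA1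
  have hA1pos : 0 < A1 := Real.rpow_pos_of_pos (by positivity) _
  have hψdiv : Tendsto (fun r => ψ r / r) atTop (𝓝 a) := by
    have h1 := hψasymp.const_mul a
    rw [mul_one] at h1
    apply h1.congr
    intro r
    rw [mul_div_assoc', mul_div_mul_left _ _ ha.ne']
  have hratio : Tendsto (fun r => ψ r / Svar n ψ r) atTop (𝓝 (a / A1)) := by
    have hd := hψdiv.div (Svar_div_tendsto hn ha hψA hψasymp) hA1pos.ne'
    apply hd.congr'
    filter_upwards [eventually_gt_atTop 0] with r hr
    have hSv : 0 < Svar n ψ r := Svar_pos hn ha hψA hψasymp hr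
    rw [Pi.div_apply]
    field_simp
  have hpow := hratio.pow (2 * (n - 1))
  have hcomp := hpow.comp hrOftop
  have hfinal : Tendsto (fun s => ψ (rOf s) ^ (2 * (n - 1)) / s ^ (2 * (n - 1))) atTop
      (𝓝 ((a / A1) ^ (2 * (n - 1)))) := by
    apply hcomp.congr'
    filter_upwards [eventually_gt_atTop 0] with s hs0
    obtain ⟨hr1, hr2⟩ := hspec s hs0
    simp only [Function.comp_apply]
    rw [div_pow, hr2]
  have hA1eq : A1 = a ^ (((n:ℝ) - 1) / ((n:ℝ) - 2)) := by
    rw [hA1, inv_pow, ← Real.rpow_natCast a (n - 1), cast_sub_one hn, ← Real.rpow_neg ha.le,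
      ← Real.rpow_mul ha.le]
    congr 1
    field_simp
  have hdivA : a / A1 = a ^ (1 - ((n:ℝ) - 1) / ((n:ℝ) - 2)) := by
    rw [hA1eq, Real.rpow_sub ha, Real.rpow_one]
  have h2k : ((2 * (n - 1) : ℕ) : ℝ) = 2 * ((n:ℝ) - 1) := by
    push_cast [Nat.cast_sub (show 1 ≤ n by omega)]
    ring
  have hval : (a / A1) ^ (2 * (n - 1)) = a ^ (-(2 * ((n:ℝ) - 1) / ((n:ℝ) - 2))) := by
    rw [hdivA, ← Real.rpow_natCast (a ^ (1 - ((n:ℝ) - 1) / ((n:ℝ) - 2))) (2 * (n - 1)),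
      ← Real.rpow_mul ha.le, h2k]
    congr 1
    field_simp
    ring
  rwa [hval] at hfinal
end

section
/- Let R, Q > 0 and μ < −1 be fixed parameters, and let ψ be a C² solution of ψ''(r) = Q r^{2μ} ψ(r) for all r > 2R, with ψ'(2R) > 0 and ψ(2R) > 0. Then there exists c > 0 such that ψ(r) ∼ c r as r → +∞, i.e. lim_{r→+∞} ψ(r)/r = c. -/
open Set Filter Real

/-- Lemma 8.1 of the paper. Let `R, Q > 0` and `μ < -1`, and let
`ψ` be a `C²` solution of `ψ''(r) = Q r^{2μ} ψ(r)` for `r > 2R`, with `ψ(2R) > 0` and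
`ψ'(2R) > 0`. Then `ψ(r) ∼ c r` as `r → +∞` for some `c > 0`. -/
theorem stmt_16
    (R Q μ : ℝ) (hR : 0 < R) (hQ : 0 < Q) (hμ : μ < -1)
    (ψ : ℝ → ℝ)
    (hC2 : ContDiffOn ℝ 2 ψ (Set.Ici (2 * R)))
    (hψ2R : 0 < ψ (2 * R))
    (hψ'2R : 0 < derivWithin ψ (Set.Ici (2 * R)) (2 * R))
    (hode : ∀ r : ℝ, 2 * R < r → deriv (deriv ψ) r = Q * r ^ (2 * μ) * ψ r) :
    ∃ c : ℝ, 0 < c ∧ Filter.Tendsto (fun r => ψ r / r) Filter.atTop (nhds c) := by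
  have ha : (0:ℝ) < 2 * R := by linarith
  set a : ℝ := 2 * R with ha_def
  set g : ℝ → ℝ := derivWithin ψ (Set.Ici a) with hg_def
  have hUD : UniqueDiffOn ℝ (Set.Ici a) := uniqueDiffOn_Ici a
  have hψcont : ContinuousOn ψ (Set.Ici a) := hC2.continuousOn
  have hgC1 : ContDiffOn ℝ 1 g (Set.Ici a) := hC2.derivWithin hUD (by norm_num)
  have hgcont : ContinuousOn g (Set.Ici a) := hgC1.continuousOn
  have hg_eq : ∀ x, a < x → g x = deriv ψ x := fun x hx =>
    derivWithin_of_mem_nhds (Ici_mem_nhds hx)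
  have hψdiff : ∀ x, a < x → HasDerivAt ψ (g x) x := by
    intro x hx
    have h1 : DifferentiableAt ℝ ψ x :=
      ((hC2.differentiableOn (by norm_num)) x (le_of_lt hx)).differentiableAt
        (Ici_mem_nhds hx)
    rw [hg_eq x hx]; exact h1.hasDerivAt
  have hgdiff : ∀ x, a < x → HasDerivAt g (Q * x ^ (2*μ) * ψ x) x := by
    intro x hx
    have h1 : DifferentiableAt ℝ g x :=
      ((hgC1.differentiableOn (by norm_num)) x (le_of_lt hx)).differentiableAt (Ici_mem_nhds hx)
    have h2 : g =ᶠ[nhds x] deriv ψ := by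
      filter_upwards [Ioi_mem_nhds hx] with y hy
      exact hg_eq y hy
    have h3 : deriv g x = deriv (deriv ψ) x := h2.deriv_eq
    have h4 := h1.hasDerivAt
    rwa [h3, hode x hx] at h4
  -- positivity of ψ and g on Ici a
  have hpos : ∀ x, a ≤ x → 0 < ψ x ∧ 0 < g x := by
    by_contra hcon
    push_neg at hcon
    obtain ⟨x0, hx0a, hx0⟩ := hcon
    have hx0' : ψ x0 ≤ 0 ∨ g x0 ≤ 0 := by
      rcases le_or_gt (ψ x0) 0 with h | h
      · exact Or.inl h
      · exact Or.inr (hx0 h)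
    set B : Set ℝ := (Set.Ici a ∩ ψ ⁻¹' Set.Iic 0) ∪ (Set.Ici a ∩ g ⁻¹' Set.Iic 0) with hB_def
    have hBclosed : IsClosed B :=
      ((hψcont.preimage_isClosed_of_isClosed isClosed_Ici isClosed_Iic).union
        (hgcont.preimage_isClosed_of_isClosed isClosed_Ici isClosed_Iic))
    have hBne : B.Nonempty := by
      refine ⟨x0, ?_⟩
      rcases hx0' with h | h
      · exact Or.inl ⟨hx0a, h⟩
      · exact Or.inr ⟨hx0a, h⟩
    have hBbdd : BddBelow B := ⟨a, by rintro x (⟨h1, _⟩ | ⟨h1, _⟩) <;> exact h1⟩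
    set t := sInf B with ht_def
    have ht_mem : t ∈ B := hBclosed.csInf_mem hBne hBbdd
    have ht_ge : a ≤ t := by rcases ht_mem with ⟨h1, _⟩ | ⟨h1, _⟩ <;> exact h1
    have ht_bad : ψ t ≤ 0 ∨ g t ≤ 0 := by
      rcases ht_mem with ⟨_, h2⟩ | ⟨_, h2⟩
      · exact Or.inl h2
      · exact Or.inr h2
    have ha_lt_t : a < t := by
      rcases eq_or_lt_of_le ht_ge with h | h
      · exfalso; rcases ht_bad with h2 | h2 <;> rw [← h] at h2 <;> [linarith; linarith]
      · exact h
    have hlt : ∀ x ∈ Set.Ico a t, 0 < ψ x ∧ 0 < g x := by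
      intro x ⟨hx1, hx2⟩
      by_contra h
      push_neg at h
      have hxB : x ∈ B := by
        rcases le_or_gt (ψ x) 0 with h' | h'
        · exact Or.inl ⟨hx1, h'⟩
        · exact Or.inr ⟨hx1, h h'⟩
      exact absurd (csInf_le hBbdd hxB) (not_le.mpr hx2)
    have hIccsub : Set.Icc a t ⊆ Set.Ici a := fun x hx => hx.1
    have hgmono : MonotoneOn g (Set.Icc a t) := by
      apply monotoneOn_of_deriv_nonneg (convex_Icc a t) (hgcont.mono hIccsub)
      · intro x hx
        rw [interior_Icc] at hx
        exact (hgdiff x hx.1).differentiableAt.differentiableWithinAt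
      · intro x hx
        rw [interior_Icc] at hx
        rw [(hgdiff x hx.1).deriv]
        have hψx := (hlt x ⟨le_of_lt hx.1, hx.2⟩).1
        have hx0 : (0:ℝ) < x := ha.trans hx.1
        positivity
    have hgt : 0 < g t := by
      have := hgmono ⟨le_rfl, ht_ge⟩ ⟨ht_ge, le_rfl⟩ ht_ge
      linarith
    have hψmono : MonotoneOn ψ (Set.Icc a t) := by
      apply monotoneOn_of_deriv_nonneg (convex_Icc a t) (hψcont.mono hIccsub)
      · intro x hx
        rw [interior_Icc] at hx
        exact (hψdiff x hx.1).differentiableAt.differentiableWithinAt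
      · intro x hx
        rw [interior_Icc] at hx
        rw [(hψdiff x hx.1).deriv]
        exact le_of_lt (hlt x ⟨le_of_lt hx.1, hx.2⟩).2
    have hψt : 0 < ψ t := by
      have := hψmono ⟨le_rfl, ht_ge⟩ ⟨ht_ge, le_rfl⟩ ht_ge
      linarith
    rcases ht_bad with h | h <;> linarith
  -- g monotone on Ici a
  have hgmonoI : MonotoneOn g (Set.Ici a) := by
    apply monotoneOn_of_deriv_nonneg (convex_Ici a) hgcont
    · intro x hx
      rw [interior_Ici] at hx
      exact (hgdiff x hx).differentiableAt.differentiableWithinAt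
    · intro x hx
      rw [interior_Ici] at hx
      rw [(hgdiff x hx).deriv]
      have hψx := (hpos x (le_of_lt hx)).1
      have hx0 : (0:ℝ) < x := ha.trans hx
      positivity
  -- linear upper bound on ψ
  have hψle : ∀ r, a ≤ r → ψ r ≤ ψ a + g r * (r - a) := by
    intro r hr
    rcases eq_or_lt_of_le hr with h | h
    · rw [← h]; simp
    · have hFmono : MonotoneOn (fun x => ψ a + g r * (x - a) - ψ x) (Set.Icc a r) := by
        apply monotoneOn_of_deriv_nonneg (convex_Icc a r)
        · exact (continuousOn_const.add (continuousOn_const.mul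
            (continuousOn_id.sub continuousOn_const))).sub (hψcont.mono fun x hx => hx.1)
        · intro x hx
          rw [interior_Icc] at hx
          have hd : HasDerivAt (fun x => ψ a + g r * (x - a) - ψ x) (g r - g x) x := by
            have h1 : HasDerivAt (fun x : ℝ => ψ a + g r * (x - a)) (g r) x := by
              simpa using (((hasDerivAt_id x).sub_const a).const_mul (g r)).const_add (ψ a)
            exact h1.sub (hψdiff x hx.1)
          exact hd.differentiableAt.differentiableWithinAt
        · intro x hx
          rw [interior_Icc] at hx
          have hd : HasDerivAt (fun x => ψ a + g r * (x - a) - ψ x) (g r - g x) x := by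
            have h1 : HasDerivAt (fun x : ℝ => ψ a + g r * (x - a)) (g r) x := by
              simpa using (((hasDerivAt_id x).sub_const a).const_mul (g r)).const_add (ψ a)
            exact h1.sub (hψdiff x hx.1)
          rw [hd.deriv]
          have := hgmonoI (Set.mem_Ici.mpr (le_of_lt hx.1)) (Set.mem_Ici.mpr hr) (le_of_lt hx.2)
          linarith
      have := hFmono ⟨le_rfl, hr⟩ ⟨hr, le_rfl⟩ hr
      simp only [sub_self, mul_zero, add_zero] at this
      linarith
  -- consequence: ψ r ≤ C * r * g r
  set C : ℝ := ψ a / (g a * a) + 1 with hC_def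
  have hga : 0 < g a := (hpos a le_rfl).2
  have hψa : 0 < ψ a := (hpos a le_rfl).1
  have hCpos : 0 < C := by positivity
  have hψle2 : ∀ r, a ≤ r → ψ r ≤ C * r * g r := by
    intro r hr
    have h1 := hψle r hr
    have h2 : g a ≤ g r := hgmonoI (Set.mem_Ici.mpr le_rfl) (Set.mem_Ici.mpr hr) hr
    have h3 : ψ a = ψ a / (g a * a) * (g a * a) := by field_simp
    have h4 : ψ a / (g a * a) * (g a * a) ≤ ψ a / (g a * a) * (g r * r) := by
      apply mul_le_mul_of_nonneg_left _ (by positivity)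
      have h5 : (0:ℝ) < r := lt_of_lt_of_le ha hr
      nlinarith
    have hgr : 0 < g r := lt_of_lt_of_le hga h2
    rw [hC_def]
    nlinarith [mul_nonneg hgr.le ha.le]
  -- bound g via log-Gronwall
  have hμ2 : 2 * μ + 2 < 0 := by linarith
  set M : ℝ := Real.exp (Real.log (g a) - Q * C / (2*μ+2) * a ^ (2*μ+2)) with hM_def
  have hgbdd : ∀ r, a ≤ r → g r ≤ M := by
    intro r hr
    have hhanti : AntitoneOn
        (fun x => Real.log (g x) - Q * C / (2*μ+2) * x ^ (2*μ+2)) (Set.Ici a) := by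
      apply antitoneOn_of_deriv_nonpos (convex_Ici a)
      · apply ContinuousOn.sub
        · exact Real.continuousOn_log.comp hgcont fun x hx =>
            ne_of_gt (hpos x hx).2
        · exact continuousOn_const.mul (continuousOn_id.rpow_const
            (fun x hx => Or.inl (ne_of_gt (ha.trans_le hx))))
      · intro x hx
        rw [interior_Ici] at hx
        have hx0 : (0:ℝ) < x := ha.trans hx
        have hd1 : HasDerivAt (fun x => Real.log (g x)) (Q * x ^ (2*μ) * ψ x / g x) x :=
          (hgdiff x hx).log (ne_of_gt (hpos x (le_of_lt hx)).2)
        have hd2 : HasDerivAt (fun x : ℝ => Q * C / (2*μ+2) * x ^ (2*μ+2))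
            (Q * C * x ^ (2*μ+1)) x := by
          have := (Real.hasDerivAt_rpow_const (p := 2*μ+2) (Or.inl hx0.ne')).const_mul
            (Q * C / (2*μ+2))
          refine this.congr_deriv ?_
          rw [show (2*μ+2-1) = 2*μ+1 by ring]
          have hne : (2*μ+2 : ℝ) ≠ 0 := by linarith
          rw [← mul_assoc, div_mul_cancel₀ _ hne]
        exact ((hd1.sub hd2)).differentiableAt.differentiableWithinAt
      · intro x hx
        rw [interior_Ici] at hx
        have hx0 : (0:ℝ) < x := ha.trans hx
        have hgx : 0 < g x := (hpos x (le_of_lt hx)).2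
        have hd1 : HasDerivAt (fun x => Real.log (g x)) (Q * x ^ (2*μ) * ψ x / g x) x :=
          (hgdiff x hx).log (ne_of_gt hgx)
        have hd2 : HasDerivAt (fun x : ℝ => Q * C / (2*μ+2) * x ^ (2*μ+2))
            (Q * C * x ^ (2*μ+1)) x := by
          have := (Real.hasDerivAt_rpow_const (p := 2*μ+2) (Or.inl hx0.ne')).const_mul
            (Q * C / (2*μ+2))
          refine this.congr_deriv ?_
          rw [show (2*μ+2-1) = 2*μ+1 by ring]
          have hne : (2*μ+2 : ℝ) ≠ 0 := by linarith
          rw [← mul_assoc, div_mul_cancel₀ _ hne]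
        rw [(show HasDerivAt (fun x => Real.log (g x) - Q * C / (2*μ+2) * x ^ (2*μ+2)) _ x from hd1.sub hd2).deriv]
        have hkey : ψ x ≤ C * x * g x := hψle2 x (le_of_lt hx)
        have hrw : x ^ (2*μ+1) = x ^ (2*μ) * x := by
          rw [← Real.rpow_add_one hx0.ne' (2*μ)]
        have hrp : (0:ℝ) < x ^ (2*μ) := Real.rpow_pos_of_pos hx0 _
        rw [sub_nonpos, div_le_iff₀ hgx, hrw]
        nlinarith [mul_le_mul_of_nonneg_left hkey
          (le_of_lt (by positivity : (0:ℝ) < Q * x ^ (2*μ)))]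
    have h1 := hhanti (Set.mem_Ici.mpr le_rfl) (Set.mem_Ici.mpr hr) hr
    have hrp : (0:ℝ) ≤ r ^ (2*μ+2) := Real.rpow_nonneg (le_of_lt (ha.trans_le hr)) _
    have hQC2 : Q * C / (2*μ+2) < 0 := div_neg_of_pos_of_neg (by positivity) hμ2
    have h2 : Real.log (g r) ≤ Real.log (g a) - Q * C / (2*μ+2) * a ^ (2*μ+2) := by
      nlinarith
    calc g r ≤ Real.exp (Real.log (g r)) := le_of_eq (Real.exp_log (hpos r hr).2).symm
      _ ≤ M := Real.exp_le_exp.mpr h2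
  -- the limit of g
  set Gm : ℝ → ℝ := fun r => g (max r a) with hGm_def
  have hGmono : Monotone Gm := fun x y hxy =>
    hgmonoI (Set.mem_Ici.mpr (le_max_right _ _)) (Set.mem_Ici.mpr (le_max_right _ _)) (max_le_max hxy le_rfl)
  have hGbdd : BddAbove (Set.range Gm) := by
    refine ⟨M, ?_⟩
    rintro _ ⟨r, rfl⟩
    exact hgbdd _ (le_max_right _ _)
  set c : ℝ := ⨆ r, Gm r with hc_def
  have hGtend : Tendsto Gm atTop (nhds c) := tendsto_atTop_ciSup hGmono hGbdd
  have hEq : Gm =ᶠ[atTop] g := by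
    filter_upwards [eventually_ge_atTop a] with r hr
    simp [hGm_def, max_eq_left hr]
  have hgtend : Tendsto g atTop (nhds c) := hGtend.congr' hEq
  have hgle : ∀ x, a ≤ x → g x ≤ c := by
    intro x hx
    have h1 : Gm x ≤ c := le_ciSup hGbdd x
    simp only [hGm_def] at h1
    rwa [max_eq_left hx] at h1
  have hcpos : 0 < c := by
    have h1 : Gm a ≤ c := le_ciSup hGbdd a
    have : Gm a = g a := by simp [hGm_def]
    linarith
  refine ⟨c, hcpos, ?_⟩
  rw [Metric.tendsto_nhds]
  intro ε hε
  have h1 : ∀ᶠ r in atTop, c - ε/2 < g r :=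
    hgtend.eventually (eventually_gt_nhds (by linarith))
  obtain ⟨s, hs1, hs2⟩ := (h1.and (eventually_ge_atTop a)).exists
  have hs0 : 0 < s := lt_of_lt_of_le ha hs2
  -- sandwich: for r ≥ s, ψ s + g s (r - s) ≤ ψ r ≤ ψ s + c (r - s)
  have hlow : ∀ r, s ≤ r → ψ s + g s * (r - s) ≤ ψ r := by
    intro r hr
    have hFmono : MonotoneOn (fun x => ψ x - g s * x) (Set.Icc s r) := by
      apply monotoneOn_of_deriv_nonneg (convex_Icc s r)
      · exact ((hψcont.mono (fun x hx => le_trans hs2 hx.1)).sub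
          (continuousOn_const.mul continuousOn_id))
      · intro x hx
        rw [interior_Icc] at hx
        have hd : HasDerivAt (fun x => ψ x - g s * x) (g x - g s) x := by
          exact ((hψdiff x (lt_of_le_of_lt hs2 hx.1)).sub
            ((hasDerivAt_id x).const_mul (g s))).congr_deriv (by ring)
        exact hd.differentiableAt.differentiableWithinAt
      · intro x hx
        rw [interior_Icc] at hx
        have hd : HasDerivAt (fun x => ψ x - g s * x) (g x - g s) x := by
          exact ((hψdiff x (lt_of_le_of_lt hs2 hx.1)).sub
            ((hasDerivAt_id x).const_mul (g s))).congr_deriv (by ring)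
        rw [hd.deriv]
        have := hgmonoI (Set.mem_Ici.mpr hs2) (Set.mem_Ici.mpr (hs2.trans hx.1.le))
          hx.1.le
        linarith
    have := hFmono ⟨le_rfl, hr⟩ ⟨hr, le_rfl⟩ hr
    simp only at this
    linarith
  have hhigh : ∀ r, s ≤ r → ψ r ≤ ψ s + c * (r - s) := by
    intro r hr
    have hFmono : MonotoneOn (fun x => c * x - ψ x) (Set.Icc s r) := by
      apply monotoneOn_of_deriv_nonneg (convex_Icc s r)
      · exact (continuousOn_const.mul continuousOn_id).sub
          (hψcont.mono (fun x hx => le_trans hs2 hx.1))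
      · intro x hx
        rw [interior_Icc] at hx
        have hd : HasDerivAt (fun x => c * x - ψ x) (c - g x) x := by
          exact (((hasDerivAt_id x).const_mul c).sub
            (hψdiff x (lt_of_le_of_lt hs2 hx.1))).congr_deriv (by ring)
        exact hd.differentiableAt.differentiableWithinAt
      · intro x hx
        rw [interior_Icc] at hx
        have hd : HasDerivAt (fun x => c * x - ψ x) (c - g x) x := by
          exact (((hasDerivAt_id x).const_mul c).sub
            (hψdiff x (lt_of_le_of_lt hs2 hx.1))).congr_deriv (by ring)
        rw [hd.deriv]
        have := hgle x (hs2.trans hx.1.le)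
        linarith
    have := hFmono ⟨le_rfl, hr⟩ ⟨hr, le_rfl⟩ hr
    simp only at this
    linarith
  -- tail estimates
  have ht1 : Tendsto (fun r : ℝ => (ψ s - g s * s) / r) atTop (nhds 0) :=
    tendsto_const_nhds.div_atTop tendsto_id
  have ht2 : Tendsto (fun r : ℝ => (ψ s - c * s) / r) atTop (nhds 0) :=
    tendsto_const_nhds.div_atTop tendsto_id
  have he1 : ∀ᶠ r in atTop, |(ψ s - g s * s) / r| < ε/2 := by
    filter_upwards [(Metric.tendsto_nhds.mp ht1) (ε/2) (by linarith)] with r hr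
    simpa [Real.dist_eq, abs_div] using hr
  have he2 : ∀ᶠ r in atTop, |(ψ s - c * s) / r| < ε/2 := by
    filter_upwards [(Metric.tendsto_nhds.mp ht2) (ε/2) (by linarith)] with r hr
    simpa [Real.dist_eq, abs_div] using hr
  filter_upwards [he1, he2, eventually_ge_atTop s] with r hr1 hr2 hr3
  have hr0 : 0 < r := lt_of_lt_of_le hs0 hr3
  have hl := hlow r hr3
  have hh := hhigh r hr3
  have hdiv1 : (ψ s + g s * (r - s)) / r ≤ ψ r / r := (div_le_div_iff_of_pos_right hr0).mpr hl
  have hdiv2 : ψ r / r ≤ (ψ s + c * (r - s)) / r := (div_le_div_iff_of_pos_right hr0).mpr hh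
  have hrw1 : (ψ s + g s * (r - s)) / r = (ψ s - g s * s) / r + g s := by
    field_simp; ring
  have hrw2 : (ψ s + c * (r - s)) / r = (ψ s - c * s) / r + c := by
    field_simp; ring
  rw [Real.dist_eq, abs_sub_lt_iff]
  constructor
  · have : ψ r / r ≤ (ψ s - c * s) / r + c := by rw [← hrw2]; exact hdiv2
    have h2 : (ψ s - c * s) / r < ε/2 := lt_of_le_of_lt (le_abs_self _) hr2
    linarith
  · have : (ψ s - g s * s) / r + g s ≤ ψ r / r := by rw [← hrw1]; exact hdiv1
    have h2 : -(ε/2) < (ψ s - g s * s) / r := neg_lt_of_abs_lt hr1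
    linarith
end
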